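/- arXiv:0711.2551 — 7 statements merged into one kernel-verified Lean document; each statement's English description precedes it below -/
import Mathlib

section
/- Let n be an even positive integer and let Θ_K, A_K, B_K1, B_K2, B_K3, C_K be real n×n matrices with Θ_K skew-symmetric, and suppose the physical realizability constraints hold: A_K Θ_K + Θ_K A_Kᵀ + B_K1·diag_{n/2}(J)·B_K1ᵀ + B_K2·diag_{n/2}(J)·B_K2ᵀ + B_K3·diag_{n/2}(J)·B_K3ᵀ = 0 and B_K1 = Θ_K C_Kᵀ diag_{n/2}(J). If S is a real invertible n×n matrix and Z is a real n×n matrix such that Θ_K = S Z Sᵀ, then the transformed matrices A_K' = S⁻¹ A_K S, B_Ki' = S⁻¹ B_Ki (i = 1,2,3), C_K' = C_K S satisfy the physical realizability constraints with Z in place of Θ_K, i.e. A_K' Z + Z (A_K')ᵀ + Σ_{i=1}^{3} B_Ki'·diag_{n/2}(J)·(B_Ki')ᵀ = 0 and B_K1' = Z (C_K')ᵀ diag_{n/2}(J). -/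
noncomputable section
open Matrix

/-- The `n × n` block-diagonal matrix `diag(J, …, J)` with `n/2` copies of
`J = [[0,1],[-1,0]]` on the diagonal (for even `n`). -/
def Jblock (n : ℕ) : Matrix (Fin n) (Fin n) ℝ :=
  Matrix.of fun i j =>
    if i.val + 1 = j.val ∧ i.val % 2 = 0 then (1 : ℝ)
    else if j.val + 1 = i.val ∧ j.val % 2 = 0 then (-1 : ℝ) else 0

/-- invariance of the physical realizability constraints under the
transformation `A_K ↦ S⁻¹ A_K S`, `B_Ki ↦ S⁻¹ B_Ki`, `C_K ↦ C_K S`, `Θ_K = S Z Sᵀ`. -/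
theorem realizability_similarity
    (n : ℕ) (hn : 0 < n) (hne : Even n)
    (ΘK AK BK1 BK2 BK3 CK S Z : Matrix (Fin n) (Fin n) ℝ)
    (hskew : ΘKᵀ = -ΘK)
    (h1 : AK * ΘK + ΘK * AKᵀ
        + BK1 * Jblock n * BK1ᵀ + BK2 * Jblock n * BK2ᵀ + BK3 * Jblock n * BK3ᵀ = 0)
    (h2 : BK1 = ΘK * CKᵀ * Jblock n)
    (hS : IsUnit S.det)
    (hZ : ΘK = S * Z * Sᵀ) :
    (S⁻¹ * AK * S) * Z + Z * (S⁻¹ * AK * S)ᵀ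
      + (S⁻¹ * BK1) * Jblock n * (S⁻¹ * BK1)ᵀ
      + (S⁻¹ * BK2) * Jblock n * (S⁻¹ * BK2)ᵀ
      + (S⁻¹ * BK3) * Jblock n * (S⁻¹ * BK3)ᵀ = 0 ∧
    S⁻¹ * BK1 = Z * (CK * S)ᵀ * Jblock n := by
  have hST : IsUnit Sᵀ.det := by rwa [Matrix.det_transpose]
  have e1 : S⁻¹ * S = 1 := Matrix.nonsing_inv_mul S hS
  have e2 : S * S⁻¹ = 1 := Matrix.mul_nonsing_inv S hS
  have e3 : Sᵀ⁻¹ * Sᵀ = 1 := Matrix.nonsing_inv_mul Sᵀ hST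
  have e4 : Sᵀ * Sᵀ⁻¹ = 1 := Matrix.mul_nonsing_inv Sᵀ hST
  have c1 : ∀ X : Matrix (Fin n) (Fin n) ℝ, S * (S⁻¹ * X) = X := fun X => by
    rw [← mul_assoc, e2, one_mul]
  have c2 : ∀ X : Matrix (Fin n) (Fin n) ℝ, S⁻¹ * (S * X) = X := fun X => by
    rw [← mul_assoc, e1, one_mul]
  have c3 : ∀ X : Matrix (Fin n) (Fin n) ℝ, Sᵀ⁻¹ * (Sᵀ * X) = X := fun X => by
    rw [← mul_assoc, e3, one_mul]
  have c4 : ∀ X : Matrix (Fin n) (Fin n) ℝ, Sᵀ * (Sᵀ⁻¹ * X) = X := fun X => by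
    rw [← mul_assoc, e4, one_mul]
  have hZ' : Z = S⁻¹ * ΘK * Sᵀ⁻¹ := by
    rw [hZ, mul_assoc S Z Sᵀ, c2, mul_assoc, e4, mul_one]
  constructor
  · have key : S⁻¹ * (AK * ΘK + ΘK * AKᵀ
        + BK1 * Jblock n * BK1ᵀ + BK2 * Jblock n * BK2ᵀ + BK3 * Jblock n * BK3ᵀ) * Sᵀ⁻¹
        = 0 := by rw [h1, Matrix.mul_zero, Matrix.zero_mul]
    rw [hZ']
    simp only [Matrix.transpose_mul, Matrix.transpose_nonsing_inv, Matrix.mul_add,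
      Matrix.add_mul, mul_assoc, c1, c2, c3, c4] at key ⊢
    exact key
  · rw [hZ', h2]
    simp only [Matrix.transpose_mul, mul_assoc, c3]
end
end

section
/- Let n be even and fix plant matrices A, B, C ∈ ℝ^{n×n}, B_w, D_w ∈ ℝ^{n×n_w}, C_z, D_z ∈ ℝ^{n_z×n}, a real skew-symmetric matrix Θ̂_K ∈ ℝ^{n×n}, and γ > 0. Suppose the matrices Â_K, B̂_K1, B̂_K2, B̂_K3, Ĉ_K ∈ ℝ^{n×n} together with Θ̂_K solve the quantum LQG problem with bound γ: there exists a symmetric positive definite P ∈ ℝ^{2n×2n} with 𝒜̂P + P𝒜̂ᵀ + ℬ̂ℬ̂ᵀ = 0 and tr(𝒞̂P𝒞̂ᵀ) < γ (where 𝒜̂, ℬ̂, 𝒞̂ are the closed-loop matrices built from the hatted controller matrices), and the physical realizability constraints hold with Θ̂_K. Suppose further Θ̂_K = S Z Sᵀ for some invertible S ∈ ℝ^{n×n} and some matrix Z. Then the matrices A_K = S⁻¹Â_K S, B_Ki = S⁻¹B̂_Ki (i = 1,2,3), C_K = Ĉ_K S solve the quantum LQG problem with bound γ and commutation matrix Θ_K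 = Z: there exists a symmetric positive definite P' ∈ ℝ^{2n×2n} with 𝒜P' + P'𝒜ᵀ + ℬℬᵀ = 0 and tr(𝒞P'𝒞ᵀ) < γ for the corresponding closed-loop matrices, and the physical realizability constraints hold with Z. -/
noncomputable section
open Matrix

/-- Closed-loop `𝒜 = [[A, B C_K],[B_K3 C, A_K]]`. -/
def clA (n : ℕ) (A B C AK BK3 CK : Matrix (Fin n) (Fin n) ℝ) :
    Matrix (Fin n ⊕ Fin n) (Fin n ⊕ Fin n) ℝ :=
  Matrix.fromBlocks A (B * CK) (BK3 * C) AK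

/-- Closed-loop `ℬ = [[B_w, B, 0],[B_K3 D_w, B_K1, B_K2]]`. -/
def clB (n nw : ℕ) (B : Matrix (Fin n) (Fin n) ℝ) (Bw Dw : Matrix (Fin n) (Fin nw) ℝ)
    (BK1 BK2 BK3 : Matrix (Fin n) (Fin n) ℝ) :
    Matrix (Fin n ⊕ Fin n) (Fin nw ⊕ (Fin n ⊕ Fin n)) ℝ :=
  Matrix.fromBlocks Bw (Matrix.fromCols B 0) (BK3 * Dw) (Matrix.fromCols BK1 BK2)

/-- Closed-loop `𝒞 = [C_z, D_z C_K]`. -/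
def clC (n nz : ℕ) (Cz Dz : Matrix (Fin nz) (Fin n) ℝ)
    (CK : Matrix (Fin n) (Fin n) ℝ) : Matrix (Fin nz) (Fin n ⊕ Fin n) ℝ :=
  Matrix.fromCols Cz (Dz * CK)

/-- The physical realizability constraints with commutation matrix `Θ_K`. -/
def PhysReal (n : ℕ) (ΘK AK BK1 BK2 BK3 CK : Matrix (Fin n) (Fin n) ℝ) : Prop :=
  AK * ΘK + ΘK * AKᵀ
      + BK1 * Jblock n * BK1ᵀ + BK2 * Jblock n * BK2ᵀ + BK3 * Jblock n * BK3ᵀ = 0 ∧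
  BK1 = ΘK * CKᵀ * Jblock n

/-!
Changing the controller's state coordinates by `x_K ↦ S⁻¹ x_K` conjugates the closed-loop
system by `T = diag(1, S⁻¹)`: `𝒜 ↦ T 𝒜 T⁻¹`, `ℬ ↦ T ℬ`, `𝒞 ↦ 𝒞 T⁻¹`. The Gramian
`P' = T P Tᵀ` is again positive definite, solves the transformed Lyapunov equation and gives
the same output covariance `𝒞 P 𝒞ᵀ`, hence the same cost. The realizability constraints are
congruence-equivariant: conjugating them by `S⁻¹` turns `Θ̂_K = S Z Sᵀ` into `Z`.
-/

def IsLQGCertificate {m p q : Type*} [Fintype m] [Fintype p] [Fintype q]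
    (𝒜 : Matrix m m ℝ) (ℬ : Matrix m p ℝ) (𝒞 : Matrix q m ℝ) (γ : ℝ)
    (P : Matrix m m ℝ) : Prop :=
  P.PosDef ∧ 𝒜 * P + P * 𝒜ᵀ + ℬ * ℬᵀ = 0 ∧ (𝒞 * P * 𝒞ᵀ).trace < γ

section Similarity

variable {R : Type*} [CommRing R] {m p : Type*} [Fintype m] [DecidableEq m] {T Ti : Matrix m m R}

theorem mul_mul_cancel_of_mul_eq_one (hT : Ti * T = 1) (X : Matrix m p R) :
    Ti * (T * X) = X := by
  rw [← Matrix.mul_assoc, hT, Matrix.one_mul]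

theorem transpose_mul_mul_cancel_of_mul_eq_one (hT : Ti * T = 1) (X : Matrix m p R) :
    Tᵀ * (Tiᵀ * X) = X := by
  rw [← Matrix.mul_assoc, ← transpose_mul, hT, transpose_one, Matrix.one_mul]

theorem lyapunov_similarity [Fintype p] (hT : Ti * T = 1) {𝒜 P : Matrix m m R} {ℬ : Matrix m p R}
    (h : 𝒜 * P + P * 𝒜ᵀ + ℬ * ℬᵀ = 0) :
    (T * 𝒜 * Ti) * (T * P * Tᵀ) + (T * P * Tᵀ) * (T * 𝒜 * Ti)ᵀ + (T * ℬ) * (T * ℬ)ᵀ = 0 :=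
  calc _ = T * (𝒜 * P + P * 𝒜ᵀ + ℬ * ℬᵀ) * Tᵀ := by
          simp only [transpose_mul, Matrix.mul_add, Matrix.add_mul, Matrix.mul_assoc,
            mul_mul_cancel_of_mul_eq_one hT, transpose_mul_mul_cancel_of_mul_eq_one hT]
    _ = 0 := by rw [h, Matrix.mul_zero, Matrix.zero_mul]

theorem output_covariance_similarity {q : Type*} (hT : Ti * T = 1) (P : Matrix m m R)
    (𝒞 : Matrix q m R) :
    (𝒞 * Ti) * (T * P * Tᵀ) * (𝒞 * Ti)ᵀ = 𝒞 * P * 𝒞ᵀ := by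
  simp only [transpose_mul, Matrix.mul_assoc, mul_mul_cancel_of_mul_eq_one hT,
    transpose_mul_mul_cancel_of_mul_eq_one hT]

end Similarity

theorem IsLQGCertificate.similarity {m p q : Type*} [Fintype m] [DecidableEq m] [Fintype p]
    [Fintype q] {𝒜 : Matrix m m ℝ} {ℬ : Matrix m p ℝ} {𝒞 : Matrix q m ℝ} {γ : ℝ}
    {P T Ti : Matrix m m ℝ} (hT : Ti * T = 1) (h : IsLQGCertificate 𝒜 ℬ 𝒞 γ P) :
    IsLQGCertificate (T * 𝒜 * Ti) (T * ℬ) (𝒞 * Ti) γ (T * P * Tᵀ) := by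
  obtain ⟨hP, hLyap, hCost⟩ := h
  have hTunit : IsUnit T := (isUnit_iff_isUnit_det T).2 (isUnit_det_of_left_inverse hT)
  refine ⟨?_, lyapunov_similarity hT hLyap, ?_⟩
  · simpa [star_eq_conjTranspose] using (IsUnit.posDef_star_right_conjugate_iff hTunit).2 hP
  · rwa [output_covariance_similarity hT]

section ControllerCoordinates

variable {n : ℕ} (S Si : Matrix (Fin n) (Fin n) ℝ)

def controllerChange : Matrix (Fin n ⊕ Fin n) (Fin n ⊕ Fin n) ℝ := fromBlocks 1 0 0 S

theorem controllerChange_mul :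
    controllerChange S * controllerChange Si = controllerChange (S * Si) := by
  simp [controllerChange, fromBlocks_multiply]

theorem controllerChange_one : controllerChange (1 : Matrix (Fin n) (Fin n) ℝ) = 1 :=
  fromBlocks_one

theorem clA_similarity (A B C AK BK3 CK : Matrix (Fin n) (Fin n) ℝ) :
    clA n A B C (Si * AK * S) (Si * BK3) (CK * S)
      = controllerChange Si * clA n A B C AK BK3 CK * controllerChange S := by
  simp [clA, controllerChange, fromBlocks_multiply, Matrix.mul_assoc]

theorem clB_similarity {nw : ℕ} (B : Matrix (Fin n) (Fin n) ℝ)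
    (Bw Dw : Matrix (Fin n) (Fin nw) ℝ) (BK1 BK2 BK3 : Matrix (Fin n) (Fin n) ℝ) :
    clB n nw B Bw Dw (Si * BK1) (Si * BK2) (Si * BK3)
      = controllerChange Si * clB n nw B Bw Dw BK1 BK2 BK3 := by
  simp [clB, controllerChange, fromBlocks_multiply, mul_fromCols, Matrix.mul_assoc]

theorem clC_similarity {nz : ℕ} (Cz Dz : Matrix (Fin nz) (Fin n) ℝ)
    (CK : Matrix (Fin n) (Fin n) ℝ) :
    clC n nz Cz Dz (CK * S) = clC n nz Cz Dz CK * controllerChange S := by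
  simp [clC, controllerChange, fromCols_mul_fromBlocks, Matrix.mul_assoc]

theorem PhysReal.similarity {Z AK BK1 BK2 BK3 CK : Matrix (Fin n) (Fin n) ℝ}
    (hS : Si * S = 1) (h : PhysReal n (S * Z * Sᵀ) AK BK1 BK2 BK3 CK) :
    PhysReal n Z (Si * AK * S) (Si * BK1) (Si * BK2) (Si * BK3) (CK * S) := by
  obtain ⟨hLyap, hBK1⟩ := h
  have hSt : Sᵀ * Siᵀ = 1 := by rw [← transpose_mul, hS, transpose_one]
  constructor
  · calc _ = Si * (AK * (S * Z * Sᵀ) + S * Z * Sᵀ * AKᵀ + BK1 * Jblock n * BK1ᵀ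
            + BK2 * Jblock n * BK2ᵀ + BK3 * Jblock n * BK3ᵀ) * Siᵀ := by
          simp only [transpose_mul, Matrix.mul_add, Matrix.add_mul, Matrix.mul_assoc,
            mul_mul_cancel_of_mul_eq_one hS, hSt, Matrix.mul_one]
      _ = 0 := by rw [hLyap, Matrix.mul_zero, Matrix.zero_mul]
  · simp only [hBK1, transpose_mul, Matrix.mul_assoc, mul_mul_cancel_of_mul_eq_one hS]

end ControllerCoordinates

theorem quantum_lqg_commutation_transform_general
    (n nw nz : ℕ)
    (A B C : Matrix (Fin n) (Fin n) ℝ)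
    (Bw Dw : Matrix (Fin n) (Fin nw) ℝ)
    (Cz Dz : Matrix (Fin nz) (Fin n) ℝ)
    (ΘKh : Matrix (Fin n) (Fin n) ℝ)
    (γ : ℝ)
    (AKh BK1h BK2h BK3h CKh : Matrix (Fin n) (Fin n) ℝ)
    (hlqg : ∃ P : Matrix (Fin n ⊕ Fin n) (Fin n ⊕ Fin n) ℝ, P.PosDef ∧
      clA n A B C AKh BK3h CKh * P + P * (clA n A B C AKh BK3h CKh)ᵀ
        + clB n nw B Bw Dw BK1h BK2h BK3h * (clB n nw B Bw Dw BK1h BK2h BK3h)ᵀ = 0 ∧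
      (clC n nz Cz Dz CKh * P * (clC n nz Cz Dz CKh)ᵀ).trace < γ)
    (hpr : PhysReal n ΘKh AKh BK1h BK2h BK3h CKh)
    (S Z : Matrix (Fin n) (Fin n) ℝ) (hS : IsUnit S.det)
    (hZ : ΘKh = S * Z * Sᵀ) :
    -- the transformed controller
    let AK := S⁻¹ * AKh * S
    let BK1 := S⁻¹ * BK1h
    let BK2 := S⁻¹ * BK2h
    let BK3 := S⁻¹ * BK3h
    let CK := CKh * S
    (∃ P' : Matrix (Fin n ⊕ Fin n) (Fin n ⊕ Fin n) ℝ, P'.PosDef ∧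
      clA n A B C AK BK3 CK * P' + P' * (clA n A B C AK BK3 CK)ᵀ
        + clB n nw B Bw Dw BK1 BK2 BK3 * (clB n nw B Bw Dw BK1 BK2 BK3)ᵀ = 0 ∧
      (clC n nz Cz Dz CK * P' * (clC n nz Cz Dz CK)ᵀ).trace < γ) ∧
    PhysReal n Z AK BK1 BK2 BK3 CK := by
  intro AK BK1 BK2 BK3 CK
  obtain ⟨P, hP⟩ := hlqg
  let T := controllerChange S⁻¹
  have hT : controllerChange S * T = 1 := by
    rw [controllerChange_mul, mul_nonsing_inv S hS, controllerChange_one]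
  have hP' : IsLQGCertificate (clA n A B C AK BK3 CK) (clB n nw B Bw Dw BK1 BK2 BK3)
      (clC n nz Cz Dz CK) γ (T * P * Tᵀ) := by
    rw [clA_similarity, clB_similarity, clC_similarity]
    exact IsLQGCertificate.similarity hT hP
  subst hZ
  exact ⟨⟨_, hP'⟩, hpr.similarity S S⁻¹ (nonsing_inv_mul S hS)⟩

/-- a solution of the quantum LQG problem with commutation matrix
`Θ̂_K = S Z Sᵀ` transforms to a solution with commutation matrix `Z`. -/
theorem quantum_lqg_commutation_transform
    (n nw nz : ℕ) (hne : Even n)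
    (A B C : Matrix (Fin n) (Fin n) ℝ)
    (Bw Dw : Matrix (Fin n) (Fin nw) ℝ)
    (Cz Dz : Matrix (Fin nz) (Fin n) ℝ)
    (ΘKh : Matrix (Fin n) (Fin n) ℝ) (hskew : ΘKhᵀ = -ΘKh)
    (γ : ℝ) (hγ : 0 < γ)
    (AKh BK1h BK2h BK3h CKh : Matrix (Fin n) (Fin n) ℝ)
    (hlqg : ∃ P : Matrix (Fin n ⊕ Fin n) (Fin n ⊕ Fin n) ℝ, P.PosDef ∧
      clA n A B C AKh BK3h CKh * P + P * (clA n A B C AKh BK3h CKh)ᵀ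
        + clB n nw B Bw Dw BK1h BK2h BK3h * (clB n nw B Bw Dw BK1h BK2h BK3h)ᵀ = 0 ∧
      (clC n nz Cz Dz CKh * P * (clC n nz Cz Dz CKh)ᵀ).trace < γ)
    (hpr : PhysReal n ΘKh AKh BK1h BK2h BK3h CKh)
    (S Z : Matrix (Fin n) (Fin n) ℝ) (hS : IsUnit S.det)
    (hZ : ΘKh = S * Z * Sᵀ) :
    -- the transformed controller
    let AK := S⁻¹ * AKh * S
    let BK1 := S⁻¹ * BK1h
    let BK2 := S⁻¹ * BK2h
    let BK3 := S⁻¹ * BK3h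
    let CK := CKh * S
    (∃ P' : Matrix (Fin n ⊕ Fin n) (Fin n ⊕ Fin n) ℝ, P'.PosDef ∧
      clA n A B C AK BK3 CK * P' + P' * (clA n A B C AK BK3 CK)ᵀ
        + clB n nw B Bw Dw BK1 BK2 BK3 * (clB n nw B Bw Dw BK1 BK2 BK3)ᵀ = 0 ∧
      (clC n nz Cz Dz CK * P' * (clC n nz Cz Dz CK)ᵀ).trace < γ) ∧
    PhysReal n Z AK BK1 BK2 BK3 CK :=
  quantum_lqg_commutation_transform_general n nw nz A B C Bw Dw Cz Dz ΘKh γ AKh BK1h BK2h BK3h CKh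
    hlqg hpr S Z hS hZ
end
end

section
/- Let n be even, fix plant matrices A, B, C ∈ ℝ^{n×n}, B_w, D_w ∈ ℝ^{n×n_w}, C_z, D_z ∈ ℝ^{n_z×n}, a real skew-symmetric matrix Θ_K ∈ ℝ^{n×n}, and γ > 0. Suppose A_K, B_K1, B_K2, B_K3, C_K ∈ ℝ^{n×n} solve the standard LQG problem with bound γ (i.e. there exists a symmetric positive definite P ∈ ℝ^{2n×2n} with 𝒜P + P𝒜ᵀ + ℬℬᵀ = 0 and tr(𝒞P𝒞ᵀ) < γ for the closed-loop matrices), that there exists a real skew-symmetric matrix Z ∈ ℝ^{n×n} satisfying A_K Z + Z A_Kᵀ + Σ_{i=1}^{3} B_Ki·diag_{n/2}(J)·B_Kiᵀ = 0 and B_K1 = Z C_Kᵀ diag_{n/2}(J), and that there exists a real invertible matrix S with S Z Sᵀ = Θ_K. Then the matrices Â_K = S A_K S⁻¹, B̂_Ki = S B_Ki (i = 1,2,3), Ĉ_K = C_K S⁻¹ solve the quantum LQG problem with bound γ and commutation matrix Θ_K: the corresponding closed-loop Lyapunov equation has a symmetric positive definite solution with LQG cost strictly less than γ, and the hatted controller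 matrices satisfy the physical realizability constraints with Θ_K. -/
noncomputable section
open Matrix

/-!
Changing the controller state by `x_K ↦ S x_K` makes the closed loop similar to the original one
through `T = diag(I, S)`. Then `T P Tᵀ` solves the new closed-loop Lyapunov equation with the same
LQG cost, and the realizability equations for `Z` turn into those for `S Z Sᵀ = Θ_K`, because each
of their terms is carried to its congruence by `S`.
-/

section Congruence

variable {R m : Type*} [CommRing R] [Fintype m]

theorem Matrix.similar_mul_add_mul_transpose_similar [DecidableEq m] {m' : Type*} [Fintype m']
    {T : Matrix m' m R} {Ti : Matrix m m' R}
    (hT : Ti * T = 1) (A P : Matrix m m R) :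
    T * A * Ti * (T * P * Tᵀ) + T * P * Tᵀ * (T * A * Ti)ᵀ = T * (A * P + P * Aᵀ) * Tᵀ := by
  have hTt : Tᵀ * Tiᵀ = 1 := by rw [← transpose_mul, hT, transpose_one]
  calc T * A * Ti * (T * P * Tᵀ) + T * P * Tᵀ * (T * A * Ti)ᵀ
      = T * A * (Ti * T) * P * Tᵀ + T * P * (Tᵀ * Tiᵀ) * Aᵀ * Tᵀ := by
        simp only [transpose_mul, Matrix.mul_assoc]
    _ = T * (A * P + P * Aᵀ) * Tᵀ := by
        rw [hT, hTt, Matrix.mul_one, Matrix.mul_one]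
        simp only [Matrix.mul_add, Matrix.add_mul, Matrix.mul_assoc]

theorem Matrix.mul_mul_transpose_mul_left {m' k : Type*} [Fintype k] (T : Matrix m' m R)
    (B : Matrix m k R) (J : Matrix k k R) :
    T * B * J * (T * B)ᵀ = T * (B * J * Bᵀ) * Tᵀ := by
  simp only [transpose_mul, Matrix.mul_assoc]

end Congruence

def SolvesLQG {ι κ μ : Type*} [Fintype ι] [Fintype κ] [Fintype μ] (A : Matrix ι ι ℝ)
    (B : Matrix ι κ ℝ) (C : Matrix μ ι ℝ) (γ : ℝ) : Prop :=
  ∃ P : Matrix ι ι ℝ, P.PosDef ∧ A * P + P * Aᵀ + B * Bᵀ = 0 ∧ (C * P * Cᵀ).trace < γ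

theorem SolvesLQG.similar {ι κ μ : Type*} [Fintype ι] [DecidableEq ι] [Fintype κ] [Fintype μ]
    {A : Matrix ι ι ℝ} {B : Matrix ι κ ℝ} {C : Matrix μ ι ℝ} {γ : ℝ} (h : SolvesLQG A B C γ)
    {T Ti : Matrix ι ι ℝ} (hT : Ti * T = 1) :
    SolvesLQG (T * A * Ti) (T * B) (C * Ti) γ := by
  obtain ⟨P, hP, hLyap, hcost⟩ := h
  have hTt : Tᵀ * Tiᵀ = 1 := by rw [← transpose_mul, hT, transpose_one]
  refine ⟨T * P * Tᵀ, ?_, ?_, ?_⟩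
  · have hinj : Function.Injective T.vecMul :=
      vecMul_injective_iff_isUnit.2 ((isUnit_iff_isUnit_det T).2 (isUnit_det_of_left_inverse hT))
    simpa only [conjTranspose_eq_transpose_of_trivial] using hP.mul_mul_conjTranspose_same hinj
  · have hB : T * B * (T * B)ᵀ = T * (B * Bᵀ) * Tᵀ := by
      simp only [transpose_mul, Matrix.mul_assoc]
    rw [Matrix.similar_mul_add_mul_transpose_similar hT, hB, ← Matrix.add_mul, ← Matrix.mul_add,
      hLyap, Matrix.mul_zero, Matrix.zero_mul]
  · calc (C * Ti * (T * P * Tᵀ) * (C * Ti)ᵀ).trace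
        = (C * (Ti * T) * P * (Tᵀ * Tiᵀ) * Cᵀ).trace := by
          simp only [transpose_mul, Matrix.mul_assoc]
      _ < γ := by rwa [hT, hTt, Matrix.mul_one, Matrix.mul_one]

section ControllerChange

variable {n : ℕ} (S Si : Matrix (Fin n) (Fin n) ℝ)

/-- `diag(I, S)`, the closed-loop form of the controller state change `x_K ↦ S x_K`. -/
def closedLoopCoordChange : Matrix (Fin n ⊕ Fin n) (Fin n ⊕ Fin n) ℝ :=
  fromBlocks 1 0 0 S

theorem closedLoopCoordChange_mul :
    closedLoopCoordChange Si * closedLoopCoordChange S = closedLoopCoordChange (Si * S) := by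
  simp [closedLoopCoordChange, fromBlocks_multiply]

theorem closedLoopCoordChange_one : closedLoopCoordChange (1 : Matrix (Fin n) (Fin n) ℝ) = 1 :=
  fromBlocks_one

theorem clA_controller_change (A B C AK BK3 CK : Matrix (Fin n) (Fin n) ℝ) :
    clA n A B C (S * AK * Si) (S * BK3) (CK * Si)
      = closedLoopCoordChange S * clA n A B C AK BK3 CK * closedLoopCoordChange Si := by
  simp [clA, closedLoopCoordChange, fromBlocks_multiply, Matrix.mul_assoc]

theorem clB_controller_change {nw : ℕ} (B : Matrix (Fin n) (Fin n) ℝ)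
    (Bw Dw : Matrix (Fin n) (Fin nw) ℝ) (BK1 BK2 BK3 : Matrix (Fin n) (Fin n) ℝ) :
    clB n nw B Bw Dw (S * BK1) (S * BK2) (S * BK3)
      = closedLoopCoordChange S * clB n nw B Bw Dw BK1 BK2 BK3 := by
  rw [clB, clB, closedLoopCoordChange, fromBlocks_multiply]
  simp [mul_fromCols, Matrix.mul_assoc]

theorem clC_controller_change {nz : ℕ} (Cz Dz : Matrix (Fin nz) (Fin n) ℝ)
    (CK : Matrix (Fin n) (Fin n) ℝ) :
    clC n nz Cz Dz (CK * Si) = clC n nz Cz Dz CK * closedLoopCoordChange Si := by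
  rw [clC, clC, closedLoopCoordChange, fromCols_mul_fromBlocks]
  simp [Matrix.mul_assoc]

variable {S Si}

theorem PhysReal.controller_change {Z AK BK1 BK2 BK3 CK : Matrix (Fin n) (Fin n) ℝ}
    (h : PhysReal n Z AK BK1 BK2 BK3 CK) (hS : Si * S = 1) :
    PhysReal n (S * Z * Sᵀ) (S * AK * Si) (S * BK1) (S * BK2) (S * BK3) (CK * Si) := by
  obtain ⟨hLyap, hBK1⟩ := h
  have hSt : Sᵀ * Siᵀ = 1 := by rw [← transpose_mul, hS, transpose_one]
  constructor
  · rw [Matrix.similar_mul_add_mul_transpose_similar hS, Matrix.mul_mul_transpose_mul_left,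
      Matrix.mul_mul_transpose_mul_left, Matrix.mul_mul_transpose_mul_left]
    simp only [← Matrix.add_mul, ← Matrix.mul_add]
    rw [hLyap, Matrix.mul_zero, Matrix.zero_mul]
  · calc S * BK1 = S * Z * (Sᵀ * Siᵀ) * CKᵀ * Jblock n := by
          rw [hSt, hBK1]; simp only [Matrix.mul_one, Matrix.mul_assoc]
      _ = S * Z * Sᵀ * (CK * Si)ᵀ * Jblock n := by simp only [transpose_mul, Matrix.mul_assoc]

end ControllerChange

theorem standard_lqg_to_quantum_lqg_general
    (n nw nz : ℕ)
    (A B C : Matrix (Fin n) (Fin n) ℝ)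
    (Bw Dw : Matrix (Fin n) (Fin nw) ℝ)
    (Cz Dz : Matrix (Fin nz) (Fin n) ℝ)
    (ΘK : Matrix (Fin n) (Fin n) ℝ)
    (γ : ℝ)
    (AK BK1 BK2 BK3 CK : Matrix (Fin n) (Fin n) ℝ)
    (hlqg : ∃ P : Matrix (Fin n ⊕ Fin n) (Fin n ⊕ Fin n) ℝ, P.PosDef ∧
      clA n A B C AK BK3 CK * P + P * (clA n A B C AK BK3 CK)ᵀ
        + clB n nw B Bw Dw BK1 BK2 BK3 * (clB n nw B Bw Dw BK1 BK2 BK3)ᵀ = 0 ∧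
      (clC n nz Cz Dz CK * P * (clC n nz Cz Dz CK)ᵀ).trace < γ)
    (Z : Matrix (Fin n) (Fin n) ℝ)
    (hZpr : PhysReal n Z AK BK1 BK2 BK3 CK)
    (S : Matrix (Fin n) (Fin n) ℝ) (hS : IsUnit S.det)
    (hSZ : S * Z * Sᵀ = ΘK) :
    -- the hatted (transformed) controller
    let AKh := S * AK * S⁻¹
    let BK1h := S * BK1
    let BK2h := S * BK2
    let BK3h := S * BK3
    let CKh := CK * S⁻¹
    (∃ P' : Matrix (Fin n ⊕ Fin n) (Fin n ⊕ Fin n) ℝ, P'.PosDef ∧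
      clA n A B C AKh BK3h CKh * P' + P' * (clA n A B C AKh BK3h CKh)ᵀ
        + clB n nw B Bw Dw BK1h BK2h BK3h * (clB n nw B Bw Dw BK1h BK2h BK3h)ᵀ = 0 ∧
      (clC n nz Cz Dz CKh * P' * (clC n nz Cz Dz CKh)ᵀ).trace < γ) ∧
    PhysReal n ΘK AKh BK1h BK2h BK3h CKh := by
  intro AKh BK1h BK2h BK3h CKh
  have hS' : S⁻¹ * S = 1 := nonsing_inv_mul S hS
  have hT : closedLoopCoordChange S⁻¹ * closedLoopCoordChange S = 1 := by
    rw [closedLoopCoordChange_mul, hS', closedLoopCoordChange_one]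
  refine ⟨?_, hSZ ▸ hZpr.controller_change hS'⟩
  have h := SolvesLQG.similar hlqg hT
  rwa [← clA_controller_change, ← clB_controller_change, ← clC_controller_change] at h

/-- if `A_K, B_Ki, C_K` solve the standard LQG problem with bound `γ`,
there is a real skew-symmetric `Z` satisfying the realizability equations for the
unhatted matrices, and an invertible `S` with `S Z Sᵀ = Θ_K`, then the transformed
matrices solve the quantum LQG problem with bound `γ` and commutation matrix `Θ_K`. -/
theorem standard_lqg_to_quantum_lqg
    (n nw nz : ℕ) (hne : Even n)
    (A B C : Matrix (Fin n) (Fin n) ℝ)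
    (Bw Dw : Matrix (Fin n) (Fin nw) ℝ)
    (Cz Dz : Matrix (Fin nz) (Fin n) ℝ)
    (ΘK : Matrix (Fin n) (Fin n) ℝ) (hskewΘ : ΘKᵀ = -ΘK)
    (γ : ℝ) (hγ : 0 < γ)
    (AK BK1 BK2 BK3 CK : Matrix (Fin n) (Fin n) ℝ)
    (hlqg : ∃ P : Matrix (Fin n ⊕ Fin n) (Fin n ⊕ Fin n) ℝ, P.PosDef ∧
      clA n A B C AK BK3 CK * P + P * (clA n A B C AK BK3 CK)ᵀ
        + clB n nw B Bw Dw BK1 BK2 BK3 * (clB n nw B Bw Dw BK1 BK2 BK3)ᵀ = 0 ∧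
      (clC n nz Cz Dz CK * P * (clC n nz Cz Dz CK)ᵀ).trace < γ)
    (Z : Matrix (Fin n) (Fin n) ℝ) (hskewZ : Zᵀ = -Z)
    (hZpr : PhysReal n Z AK BK1 BK2 BK3 CK)
    (S : Matrix (Fin n) (Fin n) ℝ) (hS : IsUnit S.det)
    (hSZ : S * Z * Sᵀ = ΘK) :
    -- the hatted (transformed) controller
    let AKh := S * AK * S⁻¹
    let BK1h := S * BK1
    let BK2h := S * BK2
    let BK3h := S * BK3
    let CKh := CK * S⁻¹
    (∃ P' : Matrix (Fin n ⊕ Fin n) (Fin n ⊕ Fin n) ℝ, P'.PosDef ∧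
      clA n A B C AKh BK3h CKh * P' + P' * (clA n A B C AKh BK3h CKh)ᵀ
        + clB n nw B Bw Dw BK1h BK2h BK3h * (clB n nw B Bw Dw BK1h BK2h BK3h)ᵀ = 0 ∧
      (clC n nz Cz Dz CKh * P' * (clC n nz Cz Dz CKh)ᵀ).trace < γ) ∧
    PhysReal n ΘK AKh BK1h BK2h BK3h CKh :=
  standard_lqg_to_quantum_lqg_general n nw nz A B C Bw Dw Cz Dz ΘK γ AK BK1 BK2 BK3 CK hlqg Z hZpr S
    hS hSZ
end
end

section
/- Let n be even, fix plant matrices A, B, C ∈ ℝ^{n×n}, B_w, D_w ∈ ℝ^{n×n_w}, C_z, D_z ∈ ℝ^{n_z×n}, and γ > 0. Suppose A_K, B_K1, B_K2, B_K3, C_K ∈ ℝ^{n×n} satisfy the standard LQG conditions with bound γ (there exists a symmetric positive definite P with 𝒜P + P𝒜ᵀ + ℬℬᵀ = 0 and tr(𝒞P𝒞ᵀ) < γ). Then for a fixed real skew-symmetric matrix Θ_K, there exists an invertible S ∈ ℝ^{n×n} such that the transformed matrices S A_K S⁻¹, S B_Ki (i = 1,2,3), C_K S⁻¹ satisfy the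 physical realizability constraints with Θ_K if and only if there exists a real skew-symmetric matrix Z satisfying A_K Z + Z A_Kᵀ + Σ_{i=1}^{3} B_Ki·diag_{n/2}(J)·B_Kiᵀ = 0 and B_K1 = Z C_Kᵀ diag_{n/2}(J), together with an invertible real matrix S such that S Z Sᵀ = Θ_K. -/
noncomputable section
open Matrix

/-! The change of controller coordinates `x ↦ S x` multiplies the first realizability equation
for `Z` by `S (·) Sᵀ` and the second by `S`, turning them into the equations for the transformed
controller with `S Z Sᵀ`. So the transformed controller is realizable with `Θ_K` exactly when
the original one is with `Z = S⁻¹ Θ_K S⁻ᵀ`, which is skew-symmetric along with `Θ_K`. -/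

namespace Matrix

variable {m k R : Type*} [Fintype m] [CommRing R]

theorem mul_mul_transpose_eq_zero_iff [DecidableEq m] {S X : Matrix m m R}
    (hS : IsUnit S.det) : S * X * Sᵀ = 0 ↔ X = 0 := by
  have hS' : IsUnit S := (isUnit_iff_isUnit_det S).2 hS
  rw [((isUnit_transpose S).2 hS').mul_left_eq_zero, hS'.mul_right_eq_zero]

theorem transpose_conj_eq_neg_of_transpose_eq_neg (S : Matrix m m R) {Θ : Matrix m m R}
    (hΘ : Θᵀ = -Θ) : (S * Θ * Sᵀ)ᵀ = -(S * Θ * Sᵀ) := by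
  simp only [transpose_mul, transpose_transpose, hΘ, mul_neg, neg_mul, mul_assoc]

theorem mul_conj_inv_transpose_mul_transpose [DecidableEq m] {S : Matrix m m R}
    (hS : IsUnit S.det) (Θ : Matrix m m R) : S * (S⁻¹ * Θ * S⁻¹ᵀ) * Sᵀ = Θ := by
  simp only [transpose_nonsing_inv, mul_assoc, nonsing_inv_mul _
    (isUnit_det_transpose S hS), mul_one, mul_nonsing_inv_cancel_left _ _ hS]

theorem conj_mul_add_mul_conj_transpose [DecidableEq m] {S : Matrix m m R}
    (hS : IsUnit S.det) (A Z : Matrix m m R) :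
    S * A * S⁻¹ * (S * Z * Sᵀ) + S * Z * Sᵀ * (S * A * S⁻¹)ᵀ =
      S * (A * Z + Z * Aᵀ) * Sᵀ := by
  simp only [transpose_mul, transpose_nonsing_inv, mul_assoc, mul_add, add_mul,
    nonsing_inv_mul_cancel_left _ _ hS,
    mul_nonsing_inv_cancel_left _ _ (isUnit_det_transpose S hS)]

theorem mul_mul_transpose_mul_left_s4 [Fintype k] (S : Matrix m m R) (B : Matrix m k R)
    (J : Matrix k k R) : S * B * J * (S * B)ᵀ = S * (B * J * Bᵀ) * Sᵀ := by
  simp only [transpose_mul, Matrix.mul_assoc]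

theorem conj_mul_transpose_mul_inv [DecidableEq m] {S : Matrix m m R}
    (hS : IsUnit S.det) (Z C J : Matrix m m R) :
    S * Z * Sᵀ * (C * S⁻¹)ᵀ * J = S * (Z * Cᵀ * J) := by
  simp only [transpose_mul, transpose_nonsing_inv, mul_assoc,
    mul_nonsing_inv_cancel_left _ _ (isUnit_det_transpose S hS)]

end Matrix

theorem physReal_similarity_iff {n : ℕ} {S : Matrix (Fin n) (Fin n) ℝ} (hS : IsUnit S.det)
    (Z AK BK1 BK2 BK3 CK : Matrix (Fin n) (Fin n) ℝ) :
    PhysReal n (S * Z * Sᵀ) (S * AK * S⁻¹) (S * BK1) (S * BK2) (S * BK3) (CK * S⁻¹) ↔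
      PhysReal n Z AK BK1 BK2 BK3 CK := by
  unfold PhysReal
  rw [conj_mul_add_mul_conj_transpose hS, mul_mul_transpose_mul_left_s4,
    mul_mul_transpose_mul_left_s4, mul_mul_transpose_mul_left_s4]
  simp only [← add_mul, ← mul_add]
  rw [mul_mul_transpose_eq_zero_iff hS, conj_mul_transpose_mul_inv hS,
    ((isUnit_iff_isUnit_det S).2 hS).mul_right_inj]

theorem realizability_transform_iff_general
    (n : ℕ)
    (AK BK1 BK2 BK3 CK : Matrix (Fin n) (Fin n) ℝ)
    (ΘK : Matrix (Fin n) (Fin n) ℝ) (hskewΘ : ΘKᵀ = -ΘK) :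
    (∃ S : Matrix (Fin n) (Fin n) ℝ, IsUnit S.det ∧
      PhysReal n ΘK (S * AK * S⁻¹) (S * BK1) (S * BK2) (S * BK3) (CK * S⁻¹)) ↔
    (∃ Z : Matrix (Fin n) (Fin n) ℝ, Zᵀ = -Z ∧
      PhysReal n Z AK BK1 BK2 BK3 CK ∧
      ∃ S : Matrix (Fin n) (Fin n) ℝ, IsUnit S.det ∧ S * Z * Sᵀ = ΘK) := by
  constructor
  · rintro ⟨S, hS, hreal⟩
    have hback := mul_conj_inv_transpose_mul_transpose hS ΘK
    refine ⟨S⁻¹ * ΘK * S⁻¹ᵀ, transpose_conj_eq_neg_of_transpose_eq_neg _ hskewΘ, ?_, S, hS,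
      hback⟩
    rw [← physReal_similarity_iff hS, hback]
    exact hreal
  · rintro ⟨Z, -, hZ, S, hS, rfl⟩
    exact ⟨S, hS, (physReal_similarity_iff hS _ _ _ _ _ _).2 hZ⟩

/-- under the standard LQG conditions, existence of an invertible `S`
making the transformed controller physically realizable with commutation matrix
`Θ_K` is equivalent to existence of a skew-symmetric `Z` satisfying the
realizability equations for the original matrices together with an invertible `S`
with `S Z Sᵀ = Θ_K`. -/
theorem realizability_transform_iff
    (n nw nz : ℕ) (hne : Even n)
    (A B C : Matrix (Fin n) (Fin n) ℝ)
    (Bw Dw : Matrix (Fin n) (Fin nw) ℝ)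
    (Cz Dz : Matrix (Fin nz) (Fin n) ℝ)
    (γ : ℝ) (hγ : 0 < γ)
    (AK BK1 BK2 BK3 CK : Matrix (Fin n) (Fin n) ℝ)
    (hlqg : ∃ P : Matrix (Fin n ⊕ Fin n) (Fin n ⊕ Fin n) ℝ, P.PosDef ∧
      clA n A B C AK BK3 CK * P + P * (clA n A B C AK BK3 CK)ᵀ
        + clB n nw B Bw Dw BK1 BK2 BK3 * (clB n nw B Bw Dw BK1 BK2 BK3)ᵀ = 0 ∧
      (clC n nz Cz Dz CK * P * (clC n nz Cz Dz CK)ᵀ).trace < γ)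
    (ΘK : Matrix (Fin n) (Fin n) ℝ) (hskewΘ : ΘKᵀ = -ΘK) :
    (∃ S : Matrix (Fin n) (Fin n) ℝ, IsUnit S.det ∧
      PhysReal n ΘK (S * AK * S⁻¹) (S * BK1) (S * BK2) (S * BK3) (CK * S⁻¹)) ↔
    (∃ Z : Matrix (Fin n) (Fin n) ℝ, Zᵀ = -Z ∧
      PhysReal n Z AK BK1 BK2 BK3 CK ∧
      ∃ S : Matrix (Fin n) (Fin n) ℝ, IsUnit S.det ∧ S * Z * Sᵀ = ΘK) :=
  realizability_transform_iff_general n AK BK1 BK2 BK3 CK ΘK hskewΘ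
end
end

section
/- Let n be even, let Θ_K ∈ ℝ^{n×n} be invertible and skew-symmetric, let N, M ∈ ℝ^{n×n} be invertible, and let A, B, C ∈ ℝ^{n×n} be fixed plant matrices. Let A_K, B_K1, B_K2, B_K3, C_K, X, Y, 𝐀, 𝐂 ∈ ℝ^{n×n} be related by the change of variables 𝐀 = N A_K Mᵀ + N B_K3 C X + Y B C_K Mᵀ + Y A X and 𝐂 = C_K Mᵀ, and define B̆_Ki = N B_Ki (i = 1,2,3) and N̆ = N Θ_K. Then the physical realizability constraints A_K Θ_K + Θ_K A_Kᵀ + Σ_{i=1}^{3} B_Ki·diag_{n/2}(J)·B_Kiᵀ = 0 and B_K1 = Θ_K C_Kᵀ diag_{n/2}(J) hold if and only if the transformed constraints hold: (−𝐀M⁻ᵀ + (B̆_K3 C + Y A)X M⁻ᵀ + Y B C_K) N̆ᵀ + N̆ (𝐀M⁻ᵀ − (B̆_K3 C + Y A)X M⁻ᵀ − Y B C_K)ᵀ + Σ_{i=1}^{3} B̆_Ki·diag_{n/2}(J)·B̆_Kiᵀ = 0 and B̆_K1 = N̆ C_Kᵀ diag_{n/2}(J). -/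
noncomputable section
open Matrix

/-!
Substituting the change of variables, both transformed blocks collapse to `± N A_K`, because
`Mᵀ M⁻ᵀ = 1` cancels the scaling on the right.  The transformed Lyapunov-type constraint is then
the original one conjugated by `N` (skew-symmetry of `Θ_K` turns `-(N A_K)(N Θ_K)ᵀ` into
`N A_K Θ_K Nᵀ`), and the transformed direct-feedthrough constraint is the original one multiplied
on the left by `N`; both operations are injective since `N` is invertible.
-/

section

variable {ι R : Type*} [Fintype ι] [CommRing R]

theorem Matrix.mul_mul_transpose_eq_zero_iff_s5 [DecidableEq ι] {N : Matrix ι ι R} (hN : IsUnit N.det)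
    (S : Matrix ι ι R) : N * S * Nᵀ = 0 ↔ S = 0 := by
  have hN' : IsUnit N := (Matrix.isUnit_iff_isUnit_det N).mpr hN
  rw [((Matrix.isUnit_transpose N).mpr hN').mul_left_eq_zero, hN'.mul_right_eq_zero]

theorem change_of_variables_sub_eq [DecidableEq ι] {M : Matrix ι ι R} (hM : IsUnit M.det)
    {N A B C AK BK3 CK X Y bA : Matrix ι ι R}
    (hbA : bA = N * AK * Mᵀ + N * BK3 * C * X + Y * B * CK * Mᵀ + Y * A * X) :
    bA * (M⁻¹)ᵀ - (N * BK3 * C + Y * A) * X * (M⁻¹)ᵀ - Y * B * CK = N * AK := by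
  have hMT : Mᵀ * (M⁻¹)ᵀ = 1 := by
    rw [Matrix.transpose_nonsing_inv, Matrix.mul_nonsing_inv _ (by simpa using hM)]
  subst hbA
  simp only [Matrix.add_mul, Matrix.mul_assoc, hMT, Matrix.mul_one]
  abel

theorem realizability_sum_conj {Θ : Matrix ι ι R} (hskew : Θᵀ = -Θ)
    (N AK B₁ B₂ B₃ J : Matrix ι ι R) :
    -(N * AK) * (N * Θ)ᵀ + N * Θ * (N * AK)ᵀ
        + N * B₁ * J * (N * B₁)ᵀ + N * B₂ * J * (N * B₂)ᵀ + N * B₃ * J * (N * B₃)ᵀ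
      = N * (AK * Θ + Θ * AKᵀ + B₁ * J * B₁ᵀ + B₂ * J * B₂ᵀ + B₃ * J * B₃ᵀ) * Nᵀ := by
  simp only [Matrix.transpose_mul, hskew, Matrix.mul_add, Matrix.add_mul, Matrix.mul_assoc,
    Matrix.mul_neg, Matrix.neg_mul, neg_neg]

end

theorem realizability_change_of_variables_general
    (n : ℕ)
    (ΘK : Matrix (Fin n) (Fin n) ℝ) (hskew : ΘKᵀ = -ΘK)
    (N M : Matrix (Fin n) (Fin n) ℝ) (hN : IsUnit N.det) (hM : IsUnit M.det)
    (A B C : Matrix (Fin n) (Fin n) ℝ)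
    (AK BK1 BK2 BK3 CK X Y bA : Matrix (Fin n) (Fin n) ℝ)
    (hbA : bA = N * AK * Mᵀ + N * BK3 * C * X + Y * B * CK * Mᵀ + Y * A * X) :
    -- rescaled controller input matrices and rescaled commutation matrix
    let brB1 := N * BK1
    let brB2 := N * BK2
    let brB3 := N * BK3
    let brN := N * ΘK
    (PhysReal n ΘK AK BK1 BK2 BK3 CK ↔
      ((-(bA * (M⁻¹)ᵀ) + (brB3 * C + Y * A) * X * (M⁻¹)ᵀ + Y * B * CK) * brNᵀ
          + brN * (bA * (M⁻¹)ᵀ - (brB3 * C + Y * A) * X * (M⁻¹)ᵀ - Y * B * CK)ᵀ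
          + brB1 * Jblock n * brB1ᵀ + brB2 * Jblock n * brB2ᵀ + brB3 * Jblock n * brB3ᵀ = 0 ∧
        brB1 = brN * CKᵀ * Jblock n)) := by
  intro brB1 brB2 brB3 brN
  have hNAK := change_of_variables_sub_eq hM hbA
  have hneg_NAK : -(bA * (M⁻¹)ᵀ) + (brB3 * C + Y * A) * X * (M⁻¹)ᵀ + Y * B * CK = -(N * AK) := by
    rw [← hNAK]
    abel
  rw [hneg_NAK, hNAK, realizability_sum_conj hskew, Matrix.mul_mul_transpose_eq_zero_iff_s5 hN]
  have hfeed : brB1 = brN * CKᵀ * Jblock n ↔ BK1 = ΘK * CKᵀ * Jblock n := by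
    simp only [brB1, brN, Matrix.mul_assoc, ((Matrix.isUnit_iff_isUnit_det N).mpr hN).mul_right_inj]
  rw [hfeed]
  rfl

/-- equivalence of the physical realizability constraints and their
transformed version under the Scherer–Gahinet–Chilali change of variables. -/
theorem realizability_change_of_variables
    (n : ℕ) (hne : Even n)
    (ΘK : Matrix (Fin n) (Fin n) ℝ) (hΘ : IsUnit ΘK.det) (hskew : ΘKᵀ = -ΘK)
    (N M : Matrix (Fin n) (Fin n) ℝ) (hN : IsUnit N.det) (hM : IsUnit M.det)
    (A B C : Matrix (Fin n) (Fin n) ℝ)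
    (AK BK1 BK2 BK3 CK X Y bA bC : Matrix (Fin n) (Fin n) ℝ)
    (hX : Xᵀ = X) (hY : Yᵀ = Y)
    (hbA : bA = N * AK * Mᵀ + N * BK3 * C * X + Y * B * CK * Mᵀ + Y * A * X)
    (hbC : bC = CK * Mᵀ) :
    -- rescaled controller input matrices and rescaled commutation matrix
    let brB1 := N * BK1
    let brB2 := N * BK2
    let brB3 := N * BK3
    let brN := N * ΘK
    (PhysReal n ΘK AK BK1 BK2 BK3 CK ↔
      ((-(bA * (M⁻¹)ᵀ) + (brB3 * C + Y * A) * X * (M⁻¹)ᵀ + Y * B * CK) * brNᵀ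
          + brN * (bA * (M⁻¹)ᵀ - (brB3 * C + Y * A) * X * (M⁻¹)ᵀ - Y * B * CK)ᵀ
          + brB1 * Jblock n * brB1ᵀ + brB2 * Jblock n * brB2ᵀ + brB3 * Jblock n * brB3ᵀ = 0 ∧
        brB1 = brN * CKᵀ * Jblock n)) :=
  realizability_change_of_variables_general n ΘK hskew N M hN hM A B C AK BK1 BK2 BK3 CK X Y bA hbA
end
end

section
/- Let n ≤ m be positive integers and let Z ∈ ℝ^{m×m} be a symmetric positive semidefinite matrix with rank(Z) ≤ n whose leading n×n principal submatrix equals the identity I_n. Then there exists a matrix V ∈ ℝ^{m×n} such that Z = VVᵀ and the top n×n block of V (its first n rows) equals I_n. -/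
/-! The spectral decomposition writes `Z = C Cᵀ` with one column of `C` per nonzero eigenvalue,
so `rank Z ≤ n` lets us pad `C` to `B ∈ ℝ^{m×n}` with `Z = B Bᵀ`. The top block `Q` of `B`
satisfies `Q Qᵀ = I_n`, so `Q` is orthogonal, and `V = B Qᵀ` still has `V Vᵀ = Z` while its
top block is `Q Qᵀ = I_n`. -/

namespace Matrix

variable {ι κ κ' R : Type*} [Fintype κ]

theorem mul_eq_submatrix_mul_submatrix_of_col_eq_zero [NonUnitalNonAssocSemiring R]
    {p : κ → Prop} [DecidablePred p] {M : Matrix ι κ R} {N : Matrix κ κ' R}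
    (hM : ∀ i k, ¬ p k → M i k = 0) :
    M * N = M.submatrix id ((↑) : Subtype p → κ) * N.submatrix (↑) id := by
  ext i j
  have hzero : ∑ k : {k // ¬ p k}, M i k * N k j = 0 :=
    Fintype.sum_eq_zero _ fun k => by rw [hM i k k.2, zero_mul]
  rw [mul_apply, ← Fintype.sum_subtype_add_sum_subtype p, hzero, add_zero]
  rfl

theorem exists_mul_transpose_eq_of_embedding [CommSemiring R] [Fintype κ'] [DecidableEq κ']
    (M : Matrix ι κ R) (f : κ ↪ κ') : ∃ B : Matrix ι κ' R, B * Bᵀ = M * Mᵀ := by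
  classical
  set P : Matrix κ κ' R := (1 : Matrix κ' κ' R).submatrix f id
  have hP : P * Pᵀ = 1 := by
    rw [transpose_submatrix, transpose_one, ← submatrix_mul _ _ _ _ _ Function.bijective_id,
      Matrix.one_mul, submatrix_one_embedding]
  exact ⟨M * P, by rw [transpose_mul, Matrix.mul_assoc, ← Matrix.mul_assoc P, hP, Matrix.one_mul]⟩

theorem PosSemidef.exists_eq_mul_transpose_eigenvalues_ne_zero [DecidableEq κ]
    {Z : Matrix κ κ ℝ} (hZ : Z.PosSemidef) :
    ∃ C : Matrix κ {k // hZ.isHermitian.eigenvalues k ≠ 0} ℝ, Z = C * Cᵀ := by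
  set μ := hZ.isHermitian.eigenvalues
  set U : Matrix κ κ ℝ := (hZ.isHermitian.eigenvectorUnitary : Matrix κ κ ℝ)
  set D : Matrix κ κ ℝ := diagonal fun k => √(μ k)
  have hZUD : Z = (U * D) * (U * D)ᵀ := by
    have hDD : D * Dᵀ = diagonal μ := by
      rw [diagonal_transpose, diagonal_mul_diagonal]
      congr 1; ext k; exact Real.mul_self_sqrt (hZ.eigenvalues_nonneg k)
    conv_lhs => rw [hZ.isHermitian.spectral_theorem, Unitary.conjStarAlgAut_apply]
    rw [transpose_mul, Matrix.mul_assoc U D, ← Matrix.mul_assoc D, hDD]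
    simp [U, μ, star_eq_conjTranspose, conjTranspose_eq_transpose_of_trivial, Matrix.mul_assoc]
  refine ⟨(U * D).submatrix id (↑), ?_⟩
  rw [hZUD, transpose_submatrix]
  refine mul_eq_submatrix_mul_submatrix_of_col_eq_zero fun i k hk => ?_
  simp [D, not_not.mp hk]

theorem PosSemidef.exists_eq_mul_transpose_of_rank_le [DecidableEq κ] [Fintype κ'] [DecidableEq κ']
    {Z : Matrix κ κ ℝ} (hZ : Z.PosSemidef) (hrank : Z.rank ≤ Fintype.card κ') :
    ∃ B : Matrix κ κ' ℝ, Z = B * Bᵀ := by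
  obtain ⟨C, hC⟩ := hZ.exists_eq_mul_transpose_eigenvalues_ne_zero
  obtain ⟨f⟩ : Nonempty ({k // hZ.isHermitian.eigenvalues k ≠ 0} ↪ κ') :=
    Function.Embedding.nonempty_of_card_le (hZ.isHermitian.rank_eq_card_non_zero_eigs ▸ hrank)
  obtain ⟨B, hB⟩ := exists_mul_transpose_eq_of_embedding C f
  exact ⟨B, hC.trans hB.symm⟩

theorem exists_mul_transpose_eq_and_submatrix_eq_one [CommRing R] [DecidableEq κ]
    (B : Matrix ι κ R) (e : κ → ι) (h : (B * Bᵀ).submatrix e e = 1) :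
    ∃ V : Matrix ι κ R, V * Vᵀ = B * Bᵀ ∧ V.submatrix e id = 1 := by
  set Q := B.submatrix e id
  have hQQ : Q * Qᵀ = 1 := by
    rw [← h, submatrix_mul _ _ _ id _ Function.bijective_id]; rfl
  have hQQ' : Qᵀ * Q = 1 := mul_eq_one_comm.mp hQQ
  refine ⟨B * Qᵀ, ?_, ?_⟩
  · rw [transpose_mul, transpose_transpose, Matrix.mul_assoc, ← Matrix.mul_assoc Qᵀ, hQQ',
      Matrix.one_mul]
  · rw [submatrix_mul _ _ _ id _ Function.bijective_id, submatrix_id_id, hQQ]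

end Matrix

open Matrix

theorem psd_low_rank_factorization_with_identity_block_general
    (n m : ℕ) (hnm : n ≤ m)
    (Z : Matrix (Fin m) (Fin m) ℝ)
    (hZ : Z.PosSemidef)
    (hrank : Z.rank ≤ n)
    (hlead : Z.submatrix (Fin.castLE hnm) (Fin.castLE hnm) = (1 : Matrix (Fin n) (Fin n) ℝ)) :
    ∃ V : Matrix (Fin m) (Fin n) ℝ,
      Z = V * Vᵀ ∧
      V.submatrix (Fin.castLE hnm) id = (1 : Matrix (Fin n) (Fin n) ℝ) := by
  obtain ⟨B, rfl⟩ := hZ.exists_eq_mul_transpose_of_rank_le (κ' := Fin n) (by simpa using hrank)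
  obtain ⟨V, hV, hVone⟩ := exists_mul_transpose_eq_and_submatrix_eq_one B _ hlead
  exact ⟨V, hV.symm, hVone⟩

/-- a real symmetric positive semidefinite `m × m` matrix `Z` of rank at
most `n` whose leading `n × n` principal submatrix is the identity admits a
factorization `Z = V Vᵀ` with `V ∈ ℝ^{m×n}` whose first `n` rows form the identity. -/
theorem psd_low_rank_factorization_with_identity_block
    (n m : ℕ) (hn : 0 < n) (hnm : n ≤ m)
    (Z : Matrix (Fin m) (Fin m) ℝ)
    (hZ : Z.PosSemidef)
    (hrank : Z.rank ≤ n)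
    (hlead : Z.submatrix (Fin.castLE hnm) (Fin.castLE hnm) = (1 : Matrix (Fin n) (Fin n) ℝ)) :
    ∃ V : Matrix (Fin m) (Fin n) ℝ,
      Z = V * Vᵀ ∧
      V.submatrix (Fin.castLE hnm) id = (1 : Matrix (Fin n) (Fin n) ℝ) :=
  psd_low_rank_factorization_with_identity_block_general n m hnm Z hZ hrank hlead
end

section
/- Let 𝒜 ∈ ℝ^{m×m} be a matrix all of whose eigenvalues have strictly negative real part (an asymptotically stable matrix), and let ℬ ∈ ℝ^{m×p}. Then: (i) there exists a unique symmetric matrix P ∈ ℝ^{m×m} satisfying the Lyapunov equation 𝒜P + P𝒜ᵀ + ℬℬᵀ = 0, and this P is positive semidefinite; and (ii) for any symmetric initial condition P_0 ∈ ℝ^{m×m}, the solution P(t) of the matrix differential equation dP/dt = 𝒜P(t) + P(t)𝒜ᵀ + ℬℬᵀ, P(0) = P_0, converges to P as t → ∞. -/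
/-!
For a generalized eigenvector `v` of `𝒜` for `μ`, `exp (t • 𝒜) v` is `e^{tμ}` times a polynomial
in `t`; the generalized eigenvectors span, so `exp (t • 𝒜) → 0` when every `μ` has `re μ < 0`.

Solutions of `D' = a D + D b` are exactly `D t = exp (t • a) * D 0 * exp (t • b)` (the integrating
factor `exp (-t • a) * D t * exp (-t • b)` has derivative zero). Applied to the constant solution
`X` of `a X + X b = 0` this gives `X = exp (t • a) * X * exp (t • b) → 0`, so `X ↦ a X + X b` is
injective, hence bijective. The same formula applied to `P t - P` gives `P t → P`. Finally,
`t ↦ xᵀ exp (t • 𝒜) P exp (t • 𝒜ᵀ) x` has derivative `-‖ℬᵀ exp (t • 𝒜ᵀ) x‖² ≤ 0` and tends to `0`,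
so its value `xᵀ P x` at `t = 0` is nonnegative.
-/

open Filter Matrix NormedSpace Set Topology Finset Nat

theorem tendsto_pow_mul_cexp_mul_atTop_nhds_zero (k : ℕ) {μ : ℂ} (hμ : μ.re < 0) :
    Tendsto (fun t : ℝ => (t : ℂ) ^ k * Complex.exp (t * μ)) atTop (𝓝 0) := by
  rw [tendsto_zero_iff_norm_tendsto_zero]
  refine (tendsto_rpow_mul_exp_neg_mul_atTop_nhds_zero k (-μ.re) (neg_pos.2 hμ)).congr' ?_
  filter_upwards [eventually_ge_atTop 0] with t ht
  simp [Complex.norm_exp, abs_of_nonneg ht, mul_comm t]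

section BanachAlgebra

variable {𝔸 : Type*} [NormedRing 𝔸] [CompleteSpace 𝔸]

theorem exp_mul_exp_neg [NormedAlgebra ℚ 𝔸] (x : 𝔸) : exp x * exp (-x) = 1 := by
  rw [← NormedSpace.exp_add_of_commute (Commute.refl x).neg_right, add_neg_cancel, exp_zero]

variable [NormedAlgebra ℝ 𝔸]

theorem hasDerivWithinAt_exp_smul_mul_mul_exp_smul {Y : ℝ → 𝔸} {Y' : 𝔸} {s : Set ℝ} {t : ℝ}
    (a b : 𝔸) (hY : HasDerivWithinAt Y Y' s t) :
    HasDerivWithinAt (fun u => exp (u • a) * Y u * exp (u • b))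
      (exp (t • a) * (a * Y t + Y' + Y t * b) * exp (t • b)) s t := by
  refine (((hasDerivAt_exp_smul_const a t).hasDerivWithinAt.mul hY).mul
    (hasDerivAt_exp_smul_const' b t).hasDerivWithinAt).congr_deriv ?_
  simp only [Pi.mul_apply]
  noncomm_ring

variable {a b : 𝔸}

theorem nonneg_of_mul_add_mul_add_eq_zero (ℓ : 𝔸 →L[ℝ] ℝ)
    (ha : Tendsto (fun t : ℝ => exp (t • a)) atTop (𝓝 0))
    (hb : Tendsto (fun t : ℝ => exp (t • b)) atTop (𝓝 0)) {p q : 𝔸} (h : a * p + p * b + q = 0)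
    (hq : ∀ t : ℝ, 0 ≤ ℓ (exp (t • a) * q * exp (t • b))) : 0 ≤ ℓ p := by
  set g : ℝ → ℝ := fun t => ℓ (exp (t • a) * p * exp (t • b))
  have hg (t : ℝ) : HasDerivAt g (-ℓ (exp (t • a) * q * exp (t • b))) t := by
    have hK := hasDerivWithinAt_univ.mp
      (hasDerivWithinAt_exp_smul_mul_mul_exp_smul a b (hasDerivWithinAt_const t univ p))
    rw [add_zero, eq_neg_of_add_eq_zero_left h, mul_neg, neg_mul] at hK
    rw [← map_neg]
    exact ℓ.hasFDerivAt.comp_hasDerivAt t hK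
  have hanti : Antitone g := antitone_of_hasDerivAt_nonpos hg fun t => neg_nonpos.2 (hq t)
  have hlim : Tendsto g atTop (𝓝 0) := by
    rw [← map_zero ℓ]
    exact (ℓ.continuous.tendsto 0).comp (by simpa using (ha.mul_const p).mul hb)
  simpa [g] using le_of_tendsto hlim (eventually_atTop.2 ⟨0, fun t ht => hanti ht⟩)

variable [NormedAlgebra ℚ 𝔸]

theorem eq_exp_smul_mul_mul_exp_smul_of_hasDerivWithinAt {D : ℝ → 𝔸}
    (hD : ∀ t ∈ Ici (0 : ℝ), HasDerivWithinAt D (a * D t + D t * b) (Ici 0) t)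
    {t : ℝ} (ht : 0 ≤ t) :
    D t = exp (t • a) * D 0 * exp (t • b) := by
  set G : ℝ → 𝔸 := fun u => exp (-(u • a)) * D u * exp (-(u • b))
  have hG : ∀ u ∈ Ici (0 : ℝ), HasDerivWithinAt G 0 (Ici 0) u := fun u hu => by
    simpa [G] using hasDerivWithinAt_exp_smul_mul_mul_exp_smul (-a) (-b) (hD u hu)
  have hGconst : G t = G 0 :=
    constant_of_has_deriv_right_zero
      (fun u hu => (hG u hu.1).continuousWithinAt.mono Icc_subset_Ici_self)
      (fun u hu => (hG u hu.1).mono (Ici_subset_Ici.mpr hu.1)) t ⟨ht, le_rfl⟩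
  calc D t = exp (t • a) * G t * exp (t • b) := by
        simp only [G, ← mul_assoc, exp_mul_exp_neg, one_mul]
        rw [mul_assoc, ← neg_neg (t • b), neg_neg (-_), exp_mul_exp_neg, mul_one]
    _ = exp (t • a) * D 0 * exp (t • b) := by simp [hGconst, G]

theorem eq_zero_of_mul_add_mul_eq_zero (ha : Tendsto (fun t : ℝ => exp (t • a)) atTop (𝓝 0))
    (hb : Tendsto (fun t : ℝ => exp (t • b)) atTop (𝓝 0)) {x : 𝔸} (hx : a * x + x * b = 0) :
    x = 0 := by
  have hfixed : ∀ t ≥ (0 : ℝ), x = exp (t • a) * x * exp (t • b) := fun t ht =>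
    eq_exp_smul_mul_mul_exp_smul_of_hasDerivWithinAt (D := fun _ => x)
      (fun u _ => by simpa [hx] using hasDerivWithinAt_const u (Ici 0) x) ht
  exact tendsto_nhds_unique (tendsto_const_nhds.congr' (eventually_atTop.2 ⟨0, hfixed⟩))
    (by simpa using (ha.mul_const x).mul hb)

theorem existsUnique_mul_add_mul_eq [FiniteDimensional ℝ 𝔸]
    (ha : Tendsto (fun t : ℝ => exp (t • a)) atTop (𝓝 0))
    (hb : Tendsto (fun t : ℝ => exp (t • b)) atTop (𝓝 0)) (c : 𝔸) :
    ∃! x, a * x + x * b = c := by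
  set L : 𝔸 →ₗ[ℝ] 𝔸 := LinearMap.mulLeft ℝ a + LinearMap.mulRight ℝ b
  have hL : Function.Injective L :=
    (injective_iff_map_eq_zero L).2 fun x hx => eq_zero_of_mul_add_mul_eq_zero ha hb hx
  obtain ⟨x, hx⟩ := LinearMap.injective_iff_surjective.1 hL c
  exact ⟨x, hx, fun y hy => hL (hy.trans hx.symm)⟩

end BanachAlgebra

namespace Matrix

-- Only used to apply the Banach-algebra lemmas; it induces the usual topology on matrices.
attribute [local instance] Matrix.linftyOpNormedRing Matrix.linftyOpNormedAlgebra

variable {n : Type*} [Fintype n] [DecidableEq n]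

theorem exp_smul_mulVec_eq_sum (A : Matrix n n ℂ) (μ t : ℂ) {k : ℕ} {v : n → ℂ}
    (hv : (A - μ • 1) ^ k *ᵥ v = 0) :
    exp (t • A) *ᵥ v =
      Complex.exp (t * μ) • ∑ i ∈ range k, (t ^ i / i !) • ((A - μ • 1) ^ i *ᵥ v) := by
  set N := A - μ • 1
  have hsplit : t • A = scalar n (t * μ) + t • N := by
    rw [scalar_apply, ← smul_one_eq_diagonal, smul_sub, smul_smul, add_sub_cancel]
  have hscalar : exp (scalar n (t * μ)) = Complex.exp (t * μ) • 1 := by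
    rw [scalar_apply, exp_diagonal, Pi.exp_def, ← Complex.exp_eq_exp_ℂ, smul_one_eq_diagonal]
  have hnil : ∀ i ∉ range k, ((i !⁻¹ : ℂ) • (t • N) ^ i) *ᵥ v = 0 := fun i hi => by
    obtain ⟨j, rfl⟩ := Nat.exists_eq_add_of_le' (not_lt.mp (mem_range.not.mp hi))
    rw [smul_pow, smul_mulVec, smul_mulVec, pow_add N, ← mulVec_mulVec, hv, mulVec_zero,
      smul_zero, smul_zero]
  have hexpN : exp (t • N) *ᵥ v = ∑ i ∈ range k, ((i !⁻¹ : ℂ) • (t • N) ^ i) *ᵥ v :=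
    ((exp_series_hasSum_exp' (𝕂 := ℂ) (t • N)).map (mulVec.addMonoidHomLeft v)
      (continuous_id.matrix_mulVec continuous_const)).unique (hasSum_sum_of_ne_finset_zero hnil)
  rw [hsplit, Matrix.exp_add_of_commute _ _ (scalar_commute _ (Commute.all _) _), hscalar,
    smul_mul_assoc, one_mul, smul_mulVec, hexpN]
  congr 1
  refine sum_congr rfl fun i _ => ?_
  simp [smul_pow, smul_mulVec, smul_smul, div_eq_mul_inv, mul_comm]

theorem tendsto_exp_smul_mulVec_of_mem_maxGenEigenspace (A : Matrix n n ℂ) {μ : ℂ}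
    (hμ : μ.re < 0) {v : n → ℂ} (hv : v ∈ Module.End.maxGenEigenspace A.toLin' μ) :
    Tendsto (fun t : ℝ => exp ((t : ℂ) • A) *ᵥ v) atTop (𝓝 0) := by
  obtain ⟨k, hk⟩ := (Module.End.mem_maxGenEigenspace _ _ _).mp hv
  have hk' : (A - μ • 1) ^ k *ᵥ v = 0 := by
    rwa [← toLinAlgEquiv'_apply, map_pow, map_sub, map_smul, map_one]
  have hterms : Tendsto (fun t : ℝ => ∑ i ∈ range k,
      ((t : ℂ) ^ i * Complex.exp (t * μ) / i !) • ((A - μ • 1) ^ i *ᵥ v)) atTop (𝓝 0) := by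
    simpa using tendsto_finsetSum _ fun i _ =>
      ((tendsto_pow_mul_cexp_mul_atTop_nhds_zero i hμ).div_const (i ! : ℂ)).smul_const
        ((A - μ • 1) ^ i *ᵥ v)
  refine hterms.congr fun t => ?_
  rw [exp_smul_mulVec_eq_sum A μ t hk', smul_sum]
  refine sum_congr rfl fun i _ => ?_
  rw [smul_smul, mul_div_assoc', mul_comm (Complex.exp _)]

theorem tendsto_exp_smul_mulVec_of_forall_re_neg (A : Matrix n n ℂ)
    (hA : ∀ μ ∈ spectrum ℂ A, μ.re < 0) (v : n → ℂ) :
    Tendsto (fun t : ℝ => exp ((t : ℂ) • A) *ᵥ v) atTop (𝓝 0) := by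
  have hv : v ∈ ⨆ μ, Module.End.maxGenEigenspace A.toLin' μ := by
    rw [Module.End.iSup_maxGenEigenspace_eq_top]
    trivial
  refine Submodule.iSup_induction _
    (motive := fun w => Tendsto (fun t : ℝ => exp ((t : ℂ) • A) *ᵥ w) atTop (𝓝 0)) hv
    (fun μ w hw => ?_) (by simp) fun w₁ w₂ h₁ h₂ => by simpa [mulVec_add] using h₁.add h₂
  by_cases hw0 : w = 0
  · simp [hw0]
  refine tendsto_exp_smul_mulVec_of_mem_maxGenEigenspace A (hA μ ?_) hw
  rw [← spectrum_toLin']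
  exact (Module.End.HasUnifEigenvalue.lt zero_lt_one
    (Module.End.HasUnifEigenvector.hasUnifEigenvalue ⟨hw, hw0⟩)).mem_spectrum

theorem tendsto_exp_smul_of_forall_re_neg (A : Matrix n n ℂ)
    (hA : ∀ μ ∈ spectrum ℂ A, μ.re < 0) :
    Tendsto (fun t : ℝ => exp ((t : ℂ) • A)) atTop (𝓝 0) := by
  refine tendsto_pi_nhds.2 fun i => tendsto_pi_nhds.2 fun j => ?_
  simpa [mulVec_single_one] using
    tendsto_pi_nhds.1 (tendsto_exp_smul_mulVec_of_forall_re_neg A hA (Pi.single j 1)) i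

theorem tendsto_exp_smul_of_forall_re_neg_map_ofReal (A : Matrix n n ℝ)
    (hA : ∀ μ ∈ spectrum ℂ (A.map Complex.ofReal), μ.re < 0) :
    Tendsto (fun t : ℝ => exp (t • A)) atTop (𝓝 0) := by
  have hmap (t : ℝ) :
      (exp (t • A)).map Complex.ofReal = exp ((t : ℂ) • A.map Complex.ofReal) := by
    have hsmul : (t : ℂ) • A.map Complex.ofReal = Complex.ofRealHom.mapMatrix (t • A) := by
      ext i j
      simp
    rw [hsmul]
    exact map_exp (Complex.ofRealHom.mapMatrix : Matrix n n ℝ →+* Matrix n n ℂ)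
      (continuous_id.matrix_map Complex.continuous_ofReal) (t • A)
  have h := ((continuous_id.matrix_map Complex.continuous_re).tendsto 0).comp
    (tendsto_exp_smul_of_forall_re_neg _ hA)
  simp only [Function.comp_def, ← hmap] at h
  simpa [Function.comp_def] using h

variable {A B : Matrix n n ℝ}

theorem tendsto_exp_smul_transpose (hA : Tendsto (fun t : ℝ => exp (t • A)) atTop (𝓝 0)) :
    Tendsto (fun t : ℝ => exp (t • Aᵀ)) atTop (𝓝 0) := by
  rw [← transpose_zero]
  refine ((continuous_id.matrix_transpose.tendsto _).comp hA).congr fun t => ?_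
  simp [← exp_transpose, transpose_smul]

theorem existsUnique_mul_add_mul_eq (hA : Tendsto (fun t : ℝ => exp (t • A)) atTop (𝓝 0))
    (hB : Tendsto (fun t : ℝ => exp (t • B)) atTop (𝓝 0)) (C : Matrix n n ℝ) :
    ∃! X, A * X + X * B = C :=
  _root_.existsUnique_mul_add_mul_eq hA hB C

theorem posSemidef_of_mul_add_mul_transpose_add_eq_zero
    (hA : Tendsto (fun t : ℝ => exp (t • A)) atTop (𝓝 0)) {P Q : Matrix n n ℝ} (hP : Pᵀ = P)
    (hQ : Q.PosSemidef) (h : A * P + P * Aᵀ + Q = 0) : P.PosSemidef := by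
  refine posSemidef_iff_dotProduct_mulVec.2 ⟨hP, fun x => ?_⟩
  let ℓ : Matrix n n ℝ →L[ℝ] ℝ := LinearMap.toContinuousLinearMap
    { toFun := fun M => x ⬝ᵥ M *ᵥ x
      map_add' := fun M N => by simp [add_mulVec]
      map_smul' := fun c M => by simp [smul_mulVec] }
  refine nonneg_of_mul_add_mul_add_eq_zero ℓ hA (tendsto_exp_smul_transpose hA) h fun t => ?_
  have hpsd := (hQ.mul_mul_conjTranspose_same (exp (t • A))).dotProduct_mulVec_nonneg x
  rwa [conjTranspose_eq_transpose_of_trivial, star_trivial, ← exp_transpose, transpose_smul]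
    at hpsd

theorem eq_exp_smul_mul_mul_exp_smul_of_hasDerivWithinAt_apply {D : ℝ → Matrix n n ℝ}
    (hD : ∀ i j, ∀ t ∈ Ici (0 : ℝ),
      HasDerivWithinAt (fun s => D s i j) ((A * D t + D t * B) i j) (Ici 0) t)
    {t : ℝ} (ht : 0 ≤ t) : D t = exp (t • A) * D 0 * exp (t • B) := by
  refine eq_exp_smul_mul_mul_exp_smul_of_hasDerivWithinAt (fun t ht => ?_) ht
  let e : Matrix n n ℝ ≃L[ℝ] (n → n → ℝ) := (ofLinearEquiv ℝ).symm.toContinuousLinearEquiv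
  have h : HasDerivWithinAt (fun s => e (D s)) (e (A * D t + D t * B)) (Ici 0) t :=
    hasDerivWithinAt_pi.2 fun i => hasDerivWithinAt_pi.2 fun j => hD i j t ht
  exact e.symm.hasFDerivAt.comp_hasDerivWithinAt t h

theorem tendsto_of_hasDerivWithinAt_mul_add_mul_add
    (hA : Tendsto (fun t : ℝ => exp (t • A)) atTop (𝓝 0))
    (hB : Tendsto (fun t : ℝ => exp (t • B)) atTop (𝓝 0)) {C P : Matrix n n ℝ}
    (hP : A * P + P * B + C = 0) {Y : ℝ → Matrix n n ℝ}
    (hY : ∀ i j, ∀ t ∈ Ici (0 : ℝ),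
      HasDerivWithinAt (fun s => Y s i j) ((A * Y t + Y t * B + C) i j) (Ici 0) t) :
    Tendsto Y atTop (𝓝 P) := by
  have hD : ∀ i j, ∀ t ∈ Ici (0 : ℝ), HasDerivWithinAt (fun s => (Y s - P) i j)
      ((A * (Y t - P) + (Y t - P) * B) i j) (Ici 0) t := fun i j t ht => by
    have hrhs : A * Y t + Y t * B + C = A * (Y t - P) + (Y t - P) * B := by
      rw [eq_neg_of_add_eq_zero_right hP, mul_sub, sub_mul]
      abel
    exact hrhs ▸ (hY i j t ht).sub_const (P i j)
  have hsol : Tendsto (fun t : ℝ => exp (t • A) * (Y 0 - P) * exp (t • B)) atTop (𝓝 0) := by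
    simpa using (hA.mul_const (Y 0 - P)).mul hB
  have hdecay : Tendsto (fun t => Y t - P) atTop (𝓝 0) := hsol.congr'
    (eventually_atTop.2 ⟨0, fun t ht =>
      (eq_exp_smul_mul_mul_exp_smul_of_hasDerivWithinAt_apply hD ht).symm⟩)
  simpa using hdecay.add_const P

end Matrix

/-- for a Hurwitz matrix `𝒜` and any `ℬ`, the Lyapunov equation
`𝒜P + P𝒜ᵀ + ℬℬᵀ = 0` has a unique symmetric solution, this solution is positive
semidefinite, and every solution of the matrix ODE `dP/dt = 𝒜P + P𝒜ᵀ + ℬℬᵀ` with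
symmetric initial condition converges (entrywise) to it as `t → ∞`. -/
theorem lyapunov_equation_of_hurwitz
    (m p : ℕ) (𝒜 : Matrix (Fin m) (Fin m) ℝ) (ℬ : Matrix (Fin m) (Fin p) ℝ)
    (hstable : ∀ μ ∈ spectrum ℂ (𝒜.map Complex.ofReal), μ.re < 0) :
    ∃ P : Matrix (Fin m) (Fin m) ℝ,
      -- (i) existence, uniqueness among symmetric matrices, and positive semidefiniteness
      (Pᵀ = P ∧ 𝒜 * P + P * 𝒜ᵀ + ℬ * ℬᵀ = 0) ∧
      (∀ P' : Matrix (Fin m) (Fin m) ℝ,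
        P'ᵀ = P' → 𝒜 * P' + P' * 𝒜ᵀ + ℬ * ℬᵀ = 0 → P' = P) ∧
      P.PosSemidef ∧
      -- (ii) convergence of solutions of the matrix differential equation
      (∀ P0 : Matrix (Fin m) (Fin m) ℝ, P0ᵀ = P0 →
        ∀ Pt : ℝ → Matrix (Fin m) (Fin m) ℝ, Pt 0 = P0 →
          (∀ i j : Fin m, ∀ t ∈ Set.Ici (0 : ℝ),
            HasDerivWithinAt (fun s => Pt s i j)
              ((𝒜 * Pt t + Pt t * 𝒜ᵀ + ℬ * ℬᵀ) i j) (Set.Ici 0) t) →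
          ∀ i j : Fin m,
            Tendsto (fun t => Pt t i j) atTop (nhds (P i j))) := by
  have hA := tendsto_exp_smul_of_forall_re_neg_map_ofReal 𝒜 hstable
  have hAt := tendsto_exp_smul_transpose hA
  obtain ⟨P, hP, hPunique⟩ := existsUnique_mul_add_mul_eq hA hAt (-(ℬ * ℬᵀ))
  have hlyap : 𝒜 * P + P * 𝒜ᵀ + ℬ * ℬᵀ = 0 := by rw [hP, neg_add_cancel]
  have hsymm : Pᵀ = P := hPunique _ <| by
    simpa [transpose_add, transpose_mul, add_comm] using congrArg transpose hP
  refine ⟨P, ⟨hsymm, hlyap⟩, fun P' _ hP' => hPunique P' (eq_neg_of_add_eq_zero_left hP'),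
    posSemidef_of_mul_add_mul_transpose_add_eq_zero hA hsymm
      (by simpa using posSemidef_self_mul_conjTranspose ℬ) hlyap,
    fun _ _ Pt _ hPt i j => ?_⟩
  have hconv := tendsto_of_hasDerivWithinAt_mul_add_mul_add hA hAt hlyap hPt
  exact tendsto_pi_nhds.1 (tendsto_pi_nhds.1 hconv i) j
end
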